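/- arXiv:2203.06181 — 3 statements merged into one kernel-verified Lean document; each statement's English description precedes it below -/
import Mathlib

section
/- For every integer n ≥ 1 and every measurable function g : ℝ → [0, ∞], one has ∫₀^∞ g(r − r⁻¹) · r^{n−1} dr = ∫_ℝ g(t) · ν_n(t) dt. Equivalently, the pushforward of the measure r^{n−1}dr on (0, ∞) under the map r ↦ r − r⁻¹ is the measure ν_n(t)dt on ℝ. -/
open MeasureTheory

/-- The weight function `ν_n(t) = (t + √(t² + 4))^{n−1} / (2^{n−2} · (t² + 4 − t·√(t² + 4)))`,
where `2^{n-2}` is a real power. -/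
noncomputable def nuWeight (n : ℕ) (t : ℝ) : ℝ :=
  (t + Real.sqrt (t ^ 2 + 4)) ^ (n - 1) /
    ((2 : ℝ) ^ ((n : ℝ) - 2) * (t ^ 2 + 4 - t * Real.sqrt (t ^ 2 + 4)))

lemma sqrt_key (r : ℝ) (hr : 0 < r) :
    Real.sqrt ((r - r⁻¹) ^ 2 + 4) = r + r⁻¹ := by
  have hne : r ≠ 0 := hr.ne'
  have h : (r - r⁻¹) ^ 2 + 4 = (r + r⁻¹) ^ 2 := by
    field_simp
    ring
  rw [h, Real.sqrt_sq (by positivity)]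

lemma nuWeight_comp (n : ℕ) (hn : 1 ≤ n) (r : ℝ) (hr : 0 < r) :
    nuWeight n (r - r⁻¹) = r ^ (n - 1) / (1 + (r ^ 2)⁻¹) := by
  have hne : r ≠ 0 := hr.ne'
  unfold nuWeight
  rw [sqrt_key r hr]
  have e1 : r - r⁻¹ + (r + r⁻¹) = 2 * r := by ring
  have e2 : (r - r⁻¹) ^ 2 + 4 - (r - r⁻¹) * (r + r⁻¹) = 2 * (1 + (r ^ 2)⁻¹) := by
    field_simp
    ring
  rw [e1, e2]
  have e3 : (2 : ℝ) ^ ((n : ℝ) - 2) * (2 * (1 + (r ^ 2)⁻¹))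
      = (2 : ℝ) ^ (n - 1) * (1 + (r ^ 2)⁻¹) := by
    have h2 : (2 : ℝ) ^ ((n : ℝ) - 2) * 2 = (2 : ℝ) ^ ((n : ℝ) - 1) := by
      rw [show ((n : ℝ) - 1) = ((n : ℝ) - 2) + 1 by ring,
        Real.rpow_add (by norm_num), Real.rpow_one]
    have h3 : ((n : ℝ) - 1) = ((n - 1 : ℕ) : ℝ) := by
      rw [Nat.cast_sub hn]; norm_num
    rw [← mul_assoc, h2, h3, Real.rpow_natCast]
  rw [e3, mul_pow]
  rw [mul_div_mul_left _ _ (by positivity : (2 : ℝ) ^ (n - 1) ≠ 0)]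

/-- For every integer `n ≥ 1` and every measurable `g : ℝ → [0, ∞]`,
`∫₀^∞ g(r − r⁻¹) · r^{n−1} dr = ∫_ℝ g(t) · ν_n(t) dt`; i.e. the pushforward of the measure
`r^{n−1}dr` on `(0,∞)` under `r ↦ r − r⁻¹` is the measure `ν_n(t)dt` on `ℝ`. -/
theorem stmt_3 (n : ℕ) (hn : 1 ≤ n) (g : ℝ → ENNReal) (hg : Measurable g) :
    ∫⁻ r in Set.Ioi (0 : ℝ), g (r - r⁻¹) * ENNReal.ofReal (r ^ (n - 1)) =
      ∫⁻ t : ℝ, g t * ENNReal.ofReal (nuWeight n t) := by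
  have himg : (fun r : ℝ => r - r⁻¹) '' Set.Ioi 0 = Set.univ := by
    apply Set.eq_univ_of_forall
    intro t
    have hs4 : (0 : ℝ) ≤ t ^ 2 + 4 := by positivity
    have hsq : Real.sqrt (t ^ 2 + 4) ^ 2 = t ^ 2 + 4 := Real.sq_sqrt hs4
    have h1 : |t| < Real.sqrt (t ^ 2 + 4) := by
      rw [← Real.sqrt_sq_eq_abs]
      exact Real.sqrt_lt_sqrt (sq_nonneg t) (by linarith)
    obtain ⟨h2, h3⟩ := abs_lt.mp h1
    have hr : 0 < (t + Real.sqrt (t ^ 2 + 4)) / 2 := by linarith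
    refine ⟨(t + Real.sqrt (t ^ 2 + 4)) / 2, hr, ?_⟩
    have hinv : ((t + Real.sqrt (t ^ 2 + 4)) / 2)⁻¹ = (Real.sqrt (t ^ 2 + 4) - t) / 2 := by
      apply inv_eq_of_mul_eq_one_right
      linear_combination hsq / 4
    simp only [hinv]
    ring
  have hderiv : ∀ r ∈ Set.Ioi (0 : ℝ),
      HasDerivWithinAt (fun r : ℝ => r - r⁻¹) (1 + (r ^ 2)⁻¹) (Set.Ioi 0) r := by
    intro r hr
    have h := (hasDerivAt_id r).sub (hasDerivAt_inv (ne_of_gt hr))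
    exact (h.congr_deriv (by ring)).hasDerivWithinAt
  have hinj : Set.InjOn (fun r : ℝ => r - r⁻¹) (Set.Ioi 0) := by
    apply StrictMonoOn.injOn
    intro a ha b hb hab
    simp only [Set.mem_Ioi] at ha hb
    have h1 : b⁻¹ < a⁻¹ := by
      rw [inv_lt_inv₀ hb ha]
      exact hab
    simp only
    linarith
  have key : ∫⁻ x in (fun r : ℝ => r - r⁻¹) '' Set.Ioi 0,
      g x * ENNReal.ofReal (nuWeight n x)
      = ∫⁻ r in Set.Ioi (0 : ℝ), ENNReal.ofReal |1 + (r ^ 2)⁻¹| *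
        (g (r - r⁻¹) * ENNReal.ofReal (nuWeight n (r - r⁻¹))) := by
    simpa only [ContinuousLinearMap.det_toSpanSingleton] using
      MeasureTheory.lintegral_image_eq_lintegral_abs_det_fderiv_mul volume measurableSet_Ioi
        (fun x hx => (hderiv x hx).hasFDerivWithinAt) hinj
        (fun t => g t * ENNReal.ofReal (nuWeight n t))
  rw [himg, setLIntegral_univ] at key
  rw [key]
  apply setLIntegral_congr_fun measurableSet_Ioi
  intro r hr
  simp only [Set.mem_Ioi] at hr
  have hd0 : (0 : ℝ) < 1 + (r ^ 2)⁻¹ := by positivity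
  beta_reduce
  rw [nuWeight_comp n hn r hr, abs_of_pos hd0, ← mul_assoc,
    mul_comm (ENNReal.ofReal (1 + (r ^ 2)⁻¹)), mul_assoc,
    ← ENNReal.ofReal_mul hd0.le, mul_div_cancel₀ _ hd0.ne']
end

section
/- For every integer n ≥ 1 and every measurable function h : ℝ → [0, ∞], one has ∫₀^∞ (h(r − r⁻¹) / ν_n(r − r⁻¹)) · r^{n−1} dr = ∫_ℝ h(t) dt. -/
open MeasureTheory

lemma nuWeight_eq (n : ℕ) (hn : 1 ≤ n) {r : ℝ} (hr : 0 < r) :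
    nuWeight n (r - r⁻¹) = r ^ (n - 1) / (1 + (r ^ 2)⁻¹) := by
  have hr0 : r ≠ 0 := hr.ne'
  have hsq : (r - r⁻¹) ^ 2 + 4 = (r + r⁻¹) ^ 2 := by field_simp; ring
  have hs : Real.sqrt ((r - r⁻¹) ^ 2 + 4) = r + r⁻¹ := by
    rw [hsq, Real.sqrt_sq (by positivity)]
  unfold nuWeight
  rw [hs]
  have h1 : r - r⁻¹ + (r + r⁻¹) = 2 * r := by ring
  have h2 : (r - r⁻¹) ^ 2 + 4 - (r - r⁻¹) * (r + r⁻¹) = 2 * (1 + (r ^ 2)⁻¹) := by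
    field_simp; ring
  rw [h1, h2]
  have h3 : (2 : ℝ) ^ ((n : ℝ) - 2) * (2 * (1 + (r ^ 2)⁻¹))
      = 2 ^ (n - 1) * (1 + (r ^ 2)⁻¹) := by
    have e1 : (2 : ℝ) ^ ((n : ℝ) - 2) * 2 = 2 ^ ((n : ℝ) - 1) := by
      have : (2 : ℝ) ^ ((n : ℝ) - 1) = 2 ^ ((n : ℝ) - 2) * 2 ^ (1 : ℝ) := by
        rw [← Real.rpow_add (by norm_num)]; norm_num; ring_nf
      rw [this, Real.rpow_one]
    have e2 : ((n : ℝ) - 1) = ((n - 1 : ℕ) : ℝ) := by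
      push_cast [Nat.cast_sub hn]; ring
    rw [← mul_assoc, e1, e2, Real.rpow_natCast]
  rw [h3, mul_pow, mul_div_mul_left _ _ (by positivity : (2 : ℝ) ^ (n - 1) ≠ 0)]

lemma image_sub_inv : (fun r : ℝ => r - r⁻¹) '' Set.Ioi 0 = Set.univ := by
  ext t
  simp only [Set.mem_image, Set.mem_Ioi, Set.mem_univ, iff_true]
  set s := Real.sqrt (t ^ 2 + 4) with hs
  have hs2 : s ^ 2 = t ^ 2 + 4 := Real.sq_sqrt (by positivity)
  have hst : |t| < s := by
    have : |t| = Real.sqrt (t ^ 2) := (Real.sqrt_sq_eq_abs t).symm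
    rw [this]
    exact Real.sqrt_lt_sqrt (by positivity) (by linarith)
  have hpos : 0 < t + s := by
    have := neg_abs_le t
    nlinarith [abs_nonneg t]
  refine ⟨(t + s) / 2, by positivity, ?_⟩
  have hinv : ((t + s) / 2)⁻¹ = (s - t) / 2 := by
    rw [inv_div, div_eq_div_iff hpos.ne' (by norm_num : (2:ℝ) ≠ 0)]
    nlinarith
  rw [hinv]
  ring

lemma injOn_sub_inv : Set.InjOn (fun r : ℝ => r - r⁻¹) (Set.Ioi 0) := by
  have : StrictMonoOn (fun r : ℝ => r - r⁻¹) (Set.Ioi 0) := by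
    intro a ha b hb hab
    simp only [Set.mem_Ioi] at ha hb
    have : b⁻¹ < a⁻¹ := by
      rw [inv_lt_inv₀ hb ha] at *
      exact hab
    dsimp
    linarith
  exact this.injOn

/-- For every integer `n ≥ 1` and every measurable `h : ℝ → [0, ∞]`,
`∫₀^∞ (h(r − r⁻¹) / ν_n(r − r⁻¹)) · r^{n−1} dr = ∫_ℝ h(t) dt`. -/
theorem stmt_4 (n : ℕ) (hn : 1 ≤ n) (h : ℝ → ENNReal) (hh : Measurable h) :
    ∫⁻ r in Set.Ioi (0 : ℝ),
        (h (r - r⁻¹) / ENNReal.ofReal (nuWeight n (r - r⁻¹))) * ENNReal.ofReal (r ^ (n - 1)) =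
      ∫⁻ t : ℝ, h t := by
  have hderiv : ∀ r ∈ Set.Ioi (0 : ℝ),
      HasDerivWithinAt (fun r : ℝ => r - r⁻¹) (1 + (r ^ 2)⁻¹) (Set.Ioi 0) r := by
    intro r hr
    have hr0 : r ≠ 0 := (Set.mem_Ioi.mp hr).ne'
    have := (hasDerivAt_id' (x := r)).sub (hasDerivAt_inv hr0)
    simpa [sub_neg_eq_add, Pi.sub_def] using this.hasDerivWithinAt
  have key := lintegral_image_eq_lintegral_abs_det_fderiv_mul volume measurableSet_Ioi
    (f' := fun r : ℝ => (1 : ℝ →L[ℝ] ℝ).smulRight (1 + (r ^ 2)⁻¹))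
    (fun x hx => (hderiv x hx).hasFDerivWithinAt) injOn_sub_inv h
  rw [image_sub_inv] at key
  simp only [ContinuousLinearMap.smulRight_one_eq_toSpanSingleton, ContinuousLinearMap.det_toSpanSingleton] at key
  rw [← setLIntegral_univ (μ := volume) h, key]
  apply setLIntegral_congr_fun measurableSet_Ioi
  intro r hr
  dsimp only
  have hrpos : (0 : ℝ) < r := hr
  have hnu := nuWeight_eq n hn hrpos
  have hd : (0 : ℝ) < 1 + (r ^ 2)⁻¹ := by positivity
  have hrp : (0 : ℝ) < r ^ (n - 1) := by positivity
  have hnupos : 0 < nuWeight n (r - r⁻¹) := by rw [hnu]; positivity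
  have hC : ENNReal.ofReal |1 + (r ^ 2)⁻¹|
      = ENNReal.ofReal (r ^ (n - 1)) / ENNReal.ofReal (nuWeight n (r - r⁻¹)) := by
    rw [← ENNReal.ofReal_div_of_pos hnupos, abs_of_pos hd]
    congr 1
    rw [hnu]
    field_simp
  rw [hC, div_eq_mul_inv, div_eq_mul_inv]
  ring
end

section
/- Let m > 0 and fix 𝐩 ∈ ℝ³, and set p₀(𝐩) = √(|𝐩|² + m²). Then the function 𝐩′ ↦ 1/(|𝐩′|·(|𝐩′|·p₀(𝐩) − 𝐩′·𝐩))² is not Lebesgue integrable on the punctured unit ball {𝐩′ ∈ ℝ³ : 0 < |𝐩′| < 1}. -/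
open MeasureTheory RealInnerProductSpace

/-- For `m > 0`, fixed `𝐩 ∈ ℝ³` and `p₀(𝐩) = √(|𝐩|² + m²)`, the function
`𝐩′ ↦ 1/(|𝐩′|·(|𝐩′|·p₀(𝐩) − 𝐩′·𝐩))²` is not Lebesgue integrable on the punctured unit ball
`{𝐩′ : 0 < |𝐩′| < 1}`. -/
theorem stmt_15 (m : ℝ) (hm : 0 < m) (p : EuclideanSpace ℝ (Fin 3)) :
    ¬ IntegrableOn
        (fun p' : EuclideanSpace ℝ (Fin 3) =>
          (1 / (‖p'‖ * (‖p'‖ * Real.sqrt (‖p‖ ^ 2 + m ^ 2) - ⟪p', p⟫))) ^ 2)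
        {p' : EuclideanSpace ℝ (Fin 3) | 0 < ‖p'‖ ∧ ‖p'‖ < 1} volume := by
  intro h
  set E : ℝ := Real.sqrt (‖p‖ ^ 2 + m ^ 2) with hE
  set f : EuclideanSpace ℝ (Fin 3) → ℝ := fun p' =>
    (1 / (‖p'‖ * (‖p'‖ * E - ⟪p', p⟫))) ^ 2 with hf
  set S : Set (EuclideanSpace ℝ (Fin 3)) :=
    {p' : EuclideanSpace ℝ (Fin 3) | 0 < ‖p'‖ ∧ ‖p'‖ < 1} with hS
  -- basic facts
  have hpE : ‖p‖ < E := by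
    rw [hE]
    have : ‖p‖ ^ 2 < ‖p‖ ^ 2 + m ^ 2 := by nlinarith
    nlinarith [Real.sq_sqrt (by positivity : (0:ℝ) ≤ ‖p‖ ^ 2 + m ^ 2),
      Real.sqrt_nonneg (‖p‖ ^ 2 + m ^ 2), norm_nonneg p]
  have hK : 0 < E + ‖p‖ := by
    have := norm_nonneg p; linarith
  set v : ℝ := (volume (Metric.ball (0 : EuclideanSpace ℝ (Fin 3)) 1)).toReal with hv
  have hv0 : 0 < v := by
    rw [hv]
    refine ENNReal.toReal_pos (ne_of_gt (Metric.measure_ball_pos _ _ one_pos)) ?_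
    exact (measure_ball_lt_top).ne
  set I : ℝ := ∫ x in S, f x with hI
  have hfnn : ∀ x, 0 ≤ f x := fun x => sq_nonneg _
  have hInn : 0 ≤ I := setIntegral_nonneg (by
      exact (isOpen_lt continuous_const continuous_norm).inter
        (isOpen_lt continuous_norm continuous_const) |>.measurableSet) (fun x _ => hfnn x)
  -- the key inequality for every small ε
  have key : ∀ ε : ℝ, 0 < ε → 2 * ε ≤ 1 →
      7 * v / (16 * (E + ‖p‖) ^ 2 * ε) ≤ I := by
    intro ε hε hε1
    set A : Set (EuclideanSpace ℝ (Fin 3)) :=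
      Metric.ball (0 : EuclideanSpace ℝ (Fin 3)) (2 * ε) \
        Metric.closedBall (0 : EuclideanSpace ℝ (Fin 3)) ε with hA
    have hAS : A ⊆ S := by
      intro x hx
      simp only [hA, Set.mem_diff, Metric.mem_ball, Metric.mem_closedBall,
        dist_zero_right, not_le] at hx
      exact ⟨lt_of_le_of_lt hε.le hx.2, lt_of_lt_of_le hx.1 hε1⟩
    have hAmeas : MeasurableSet A :=
      measurableSet_ball.diff measurableSet_closedBall
    have hAfin : volume A ≠ ⊤ :=
      (lt_of_le_of_lt (measure_mono Set.diff_subset) measure_ball_lt_top).ne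
    have hint : IntegrableOn f A volume := h.mono_set hAS
    -- pointwise lower bound on A
    have hlow : ∀ x ∈ A, (1 / ((2 * ε) ^ 2 * (E + ‖p‖))) ^ 2 ≤ f x := by
      intro x hx
      simp only [hA, Set.mem_diff, Metric.mem_ball, Metric.mem_closedBall,
        dist_zero_right, not_le] at hx
      have hx0 : 0 < ‖x‖ := lt_trans hε hx.2
      have h1 : ⟪x, p⟫ ≤ ‖x‖ * ‖p‖ := real_inner_le_norm x p
      have h2 : -(‖x‖ * ‖p‖) ≤ ⟪x, p⟫ := by
        have := abs_real_inner_le_norm x p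
        rw [abs_le] at this; exact this.1
      set d : ℝ := ‖x‖ * (‖x‖ * E - ⟪x, p⟫) with hd
      have hd0 : 0 < d := by
        apply mul_pos hx0
        nlinarith
      have hdD : d ≤ (2 * ε) ^ 2 * (E + ‖p‖) := by
        have hxe : ‖x‖ ≤ 2 * ε := hx.1.le
        have : d ≤ ‖x‖ ^ 2 * (E + ‖p‖) := by
          rw [hd]; nlinarith
        have h2' : ‖x‖ ^ 2 * (E + ‖p‖) ≤ (2 * ε) ^ 2 * (E + ‖p‖) := by
          apply mul_le_mul_of_nonneg_right _ hK.le
          nlinarith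
        linarith
      have hDpos : 0 < (2 * ε) ^ 2 * (E + ‖p‖) := by positivity
      have : 1 / ((2 * ε) ^ 2 * (E + ‖p‖)) ≤ 1 / d :=
        one_div_le_one_div_of_le hd0 hdD
      have h0 : 0 ≤ 1 / ((2 * ε) ^ 2 * (E + ‖p‖)) := by positivity
      exact pow_le_pow_left₀ h0 this 2
    have hge := setIntegral_ge_of_const_le hAmeas hAfin hlow hint
    -- volume of annulus
    have hvol : (volume A).toReal = 7 * ε ^ 3 * v := by
      have hsub : Metric.closedBall (0 : EuclideanSpace ℝ (Fin 3)) ε ⊆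
          Metric.ball (0 : EuclideanSpace ℝ (Fin 3)) (2 * ε) :=
        Metric.closedBall_subset_ball (by linarith)
      have hcfin : volume (Metric.closedBall (0 : EuclideanSpace ℝ (Fin 3)) ε) ≠ ⊤ :=
        measure_closedBall_lt_top.ne
      rw [hA, measure_diff hsub measurableSet_closedBall.nullMeasurableSet hcfin]
      rw [ENNReal.toReal_sub_of_le (measure_mono hsub) measure_ball_lt_top.ne]
      rw [Measure.addHaar_ball _ _ (by linarith : (0:ℝ) ≤ 2 * ε),
        Measure.addHaar_closedBall _ _ hε.le]
      have hdim : Module.finrank ℝ (EuclideanSpace ℝ (Fin 3)) = 3 := by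
        simp [finrank_euclideanSpace]
      rw [hdim, ENNReal.toReal_mul, ENNReal.toReal_mul,
        ENNReal.toReal_ofReal (by positivity), ENNReal.toReal_ofReal (by positivity)]
      rw [← hv]; ring
    have hA_le_S : ∫ x in A, f x ≤ I := by
      rw [hI]
      exact setIntegral_mono_set h (Filter.Eventually.of_forall (fun x => hfnn x))
        (HasSubset.Subset.eventuallyLE hAS)
    have harith : (1 / ((2 * ε) ^ 2 * (E + ‖p‖))) ^ 2 * (7 * ε ^ 3 * v)
        = 7 * v / (16 * (E + ‖p‖) ^ 2 * ε) := by
      field_simp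
      ring
    rw [measureReal_def, hvol, smul_eq_mul, mul_comm, harith] at hge
    linarith
  -- derive the contradiction
  set K : ℝ := 16 * (E + ‖p‖) ^ 2 with hKdef
  have hK0 : 0 < K := by positivity
  set ε : ℝ := min (1/2) (7 * v / (K * (I + 1))) with hεdef
  have hI1 : 0 < I + 1 := by linarith
  have hε0 : 0 < ε := lt_min (by norm_num) (by positivity)
  have hε1 : 2 * ε ≤ 1 := by
    have := min_le_left (1/2 : ℝ) (7 * v / (K * (I + 1)))
    calc 2 * ε ≤ 2 * (1/2) := by linarith
    _ = 1 := by norm_num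
  have hkey := key ε hε0 hε1
  have hεle : ε ≤ 7 * v / (K * (I + 1)) := min_le_right _ _
  have : I + 1 ≤ 7 * v / (K * ε) := by
    rw [le_div_iff₀ (by positivity)]
    have := (le_div_iff₀ (by positivity : (0:ℝ) < K * (I + 1))).mp hεle
    nlinarith
  have : I + 1 ≤ I := by
    calc I + 1 ≤ 7 * v / (K * ε) := this
    _ = 7 * v / (16 * (E + ‖p‖) ^ 2 * ε) := by rw [hKdef]
    _ ≤ I := hkey
  linarith
end
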